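/- The space S^14 consists exactly of the functions that can be computed by H-conforming bias-free ReLU neural networks with one hidden layer: every linear combination of the 14 functions g_M with |M| ≤ 2 is computed by such a network, and conversely every function computed by an H-conforming bias-free ReLU network with one hidden layer lies in S^14. -/

import Mathlib

open Finset

/-- Extend `x ∈ ℝ⁴` by the coordinate `x₀ = 0`, giving a vector indexed by `[4]₀ = {0,…,4}`. -/
noncomputable def ext (x : Fin 4 → ℝ) : Fin 5 → ℝ := Fin.cases 0 x

/-- The cell `C_π = {x ∈ ℝ⁴ : x_{π(0)} ≤ x_{π(1)} ≤ x_{π(2)} ≤ x_{π(3)} ≤ x_{π(4)}}` of the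
hyperplane arrangement `H` (with the convention `x₀ = 0`). -/
def cell (π : Equiv.Perm (Fin 5)) : Set (Fin 4 → ℝ) :=
  {x | ∀ i : Fin 4, ext x (π i.castSucc) ≤ ext x (π i.succ)}

/-- `g : ℝ⁴ → ℝ` is `H`-conforming: it is a positively homogeneous continuous function that
is linear on each cell `C_π` of the arrangement `H` (hence continuous piecewise linear). -/
def Hconforming (g : (Fin 4 → ℝ) → ℝ) : Prop :=
  Continuous g ∧ (∀ (lam : ℝ), 0 ≤ lam → ∀ x, g (lam • x) = lam * g x) ∧
    ∀ π : Equiv.Perm (Fin 5), ∃ a : Fin 4 → ℝ, ∀ x ∈ cell π, g x = ∑ j, a j * x j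

/-- The generator `r_S` of the ray `R_S`, for `∅ ⊊ S ⊊ [4]₀`: the 0/1 indicator vector of
the complement of `S` if `0 ∈ S`, and the 0/(−1) indicator vector of `S` if `0 ∉ S`. -/
noncomputable def ray (S : Finset (Fin 5)) : Fin 4 → ℝ := fun j =>
  if (0 : Fin 5) ∈ S then (if j.succ ∈ S then 0 else 1) else (if j.succ ∈ S then -1 else 0)

/-- `g_M(x) = max_{i ∈ M} x_i` (with the convention `x₀ = 0`; junk value `0` if `M = ∅`). -/
noncomputable def gM (M : Finset (Fin 5)) (x : Fin 4 → ℝ) : ℝ :=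
  if hM : M.Nonempty then M.sup' hM (ext x) else 0

/-!
A bias-free ReLU neuron `max 0 (a ⬝ᵥ x)` can be linear on a convex set only if `a ⬝ᵥ ·` does
not take both signs there. Write `a ⬝ᵥ x = ∑ₖ wₖ xₖ` over `k ∈ [4]₀` with `∑ₖ wₖ = 0`. Any two
indices `p ≠ q` are the top and the bottom of some cell, which contains points where this form
equals `w_p` and `-w_q`; hence `w` has at most one positive and one negative entry, and an
`H`-conforming neuron is `c · max 0 (x_i - x_j)` with `c ≥ 0`. Conversely these neurons are
`H`-conforming, and `max 0 (x_i - x_j) = g_{i,j} - x_j`, `x_j = max 0 x_j - max 0 (-x_j)`, so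
both spaces are spanned by the same functions.
-/

theorem mul_nonneg_of_forall_max_zero_eq {E : Type*} [AddCommGroup E] [Module ℝ E]
    {ℓ g : E →ₗ[ℝ] ℝ} {C : Set E} (hC : Convex ℝ C) (h : ∀ x ∈ C, max 0 (ℓ x) = g x)
    {x y : E} (hx : x ∈ C) (hy : y ∈ C) : 0 ≤ ℓ x * ℓ y := by
  -- On the point of the segment `[x, y]` where `ℓ` vanishes, `g` would be positive.
  have key : ∀ x ∈ C, ∀ y ∈ C, 0 < ℓ x → ℓ y < 0 → False := by
    intro x hx y hy hxpos hyneg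
    have hxy : 0 < ℓ x - ℓ y := by linarith
    have hz := h _ (hC hx hy (div_nonneg (neg_nonneg.2 hyneg.le) hxy.le)
      (div_nonneg hxpos.le hxy.le) (by field_simp; ring))
    rw [map_add, map_add, map_smul, map_smul, map_smul, map_smul, ← h x hx, ← h y hy,
      max_eq_right hxpos.le, max_eq_left hyneg.le] at hz
    simp only [smul_eq_mul, mul_zero, add_zero] at hz
    have hzero : -ℓ y / (ℓ x - ℓ y) * ℓ x + ℓ x / (ℓ x - ℓ y) * ℓ y = 0 := by
      field_simp; ring
    have hpos : 0 < -ℓ y / (ℓ x - ℓ y) * ℓ x := mul_pos (div_pos (by linarith) hxy) hxpos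
    rw [hzero, max_self] at hz
    linarith
  by_contra hneg
  rcases mul_neg_iff.1 (not_le.1 hneg) with ⟨hxpos, hyneg⟩ | ⟨hxneg, hypos⟩
  · exact key x hx y hy hxpos hyneg
  · exact key y hy x hx hypos hxneg

theorem exists_eq_smul_single_sub_single {ι : Type*} [Fintype ι] [DecidableEq ι] [Nonempty ι]
    {w : ι → ℝ} (hsum : ∑ k, w k = 0) (hw : ∀ p q, p ≠ q → w p * w q ≤ 0) :
    ∃ c : ℝ, 0 ≤ c ∧ ∃ i j, w = c • (Pi.single i 1 - Pi.single j 1 : ι → ℝ) := by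
  by_cases hpos : ∃ i, 0 < w i
  swap
  · push Not at hpos
    have hzero := (Finset.sum_eq_zero_iff_of_nonpos fun k _ => hpos k).1 hsum
    obtain ⟨i⟩ := ‹Nonempty ι›
    exact ⟨0, le_rfl, i, i, funext fun k => by simp [hzero k]⟩
  obtain ⟨i, hi⟩ := hpos
  obtain ⟨j, hj⟩ : ∃ j, w j < 0 := by
    by_contra! hnonneg
    have hzero := (Finset.sum_eq_zero_iff_of_nonneg fun k _ => hnonneg k).1 hsum
    exact hi.ne' (hzero i (Finset.mem_univ i))
  have hij : i ≠ j := by rintro rfl; linarith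
  have hrest : ∀ k, k ≠ i ∧ k ≠ j → w k = 0 := fun k ⟨hki, hkj⟩ =>
    le_antisymm (nonpos_of_mul_nonpos_right (hw i k (Ne.symm hki)) hi)
      (nonneg_of_mul_nonpos_right (hw j k (Ne.symm hkj)) hj)
  have hji : w j = -w i := by
    rw [Fintype.sum_eq_add i j hij hrest] at hsum
    linarith
  refine ⟨w i, hi.le, i, j, funext fun k => ?_⟩
  by_cases hki : k = i
  · subst hki; simp [hij]
  by_cases hkj : k = j
  · subst hkj; simp [hki, hji]
  · simp [hki, hkj, hrest k ⟨hki, hkj⟩]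

theorem Equiv.Perm.exists_apply_eq_and_apply_eq {α : Type*} [DecidableEq α] {a b x y : α}
    (hab : a ≠ b) (hxy : x ≠ y) : ∃ π : Equiv.Perm α, π a = x ∧ π b = y := by
  have hb : Equiv.swap a x b ≠ x := fun h =>
    hab ((Equiv.swap a x).injective (h.trans (Equiv.swap_apply_left a x).symm)).symm
  refine ⟨Equiv.swap (Equiv.swap a x b) y * Equiv.swap a x, ?_, ?_⟩
  · simp only [Equiv.Perm.mul_apply, Equiv.swap_apply_left]
    exact Equiv.swap_apply_of_ne_of_ne hb.symm hxy
  · simp only [Equiv.Perm.mul_apply, Equiv.swap_apply_left]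

lemma max_zero_sub_eq {α : Type*} [AddCommGroup α] [LinearOrder α] [IsOrderedAddMonoid α]
    (a b : α) : max 0 (a - b) = max a b - b := by
  rw [← max_sub_sub_right, sub_self, max_comm]

lemma Finset.exists_eq_pair_of_card_le_two {α : Type*} [DecidableEq α] {s : Finset α}
    (hs : s.Nonempty) (hcard : s.card ≤ 2) : ∃ a b, s = {a, b} := by
  rcases (show s.card = 1 ∨ s.card = 2 by have := hs.card_pos; omega) with h | h
  · obtain ⟨a, rfl⟩ := Finset.card_eq_one.1 h
    exact ⟨a, a, (Finset.pair_eq_singleton a).symm⟩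
  · obtain ⟨a, b, -, rfl⟩ := Finset.card_eq_two.1 h
    exact ⟨a, b, rfl⟩

@[simp] lemma ext_zero (x : Fin 4 → ℝ) : ext x 0 = 0 := rfl

@[simp] lemma ext_succ (x : Fin 4 → ℝ) (j : Fin 4) : ext x j.succ = x j := rfl

lemma ext_add (x y : Fin 4 → ℝ) : ext (x + y) = ext x + ext y := by
  funext k; cases k using Fin.cases <;> simp

lemma ext_smul (c : ℝ) (x : Fin 4 → ℝ) : ext (c • x) = c • ext x := by
  funext k; cases k using Fin.cases <;> simp

lemma dotProduct_ext (w : Fin 5 → ℝ) (x : Fin 4 → ℝ) : w ⬝ᵥ ext x = Fin.tail w ⬝ᵥ x := by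
  simp [dotProduct, Fin.sum_univ_succ, Fin.tail]

lemma mem_cell_iff_monotone {π : Equiv.Perm (Fin 5)} {x : Fin 4 → ℝ} :
    x ∈ cell π ↔ Monotone (ext x ∘ π) := by
  rw [Fin.monotone_iff_le_succ]; rfl

lemma convex_cell (π : Equiv.Perm (Fin 5)) : Convex ℝ (cell π) := by
  intro x hx y hy a b ha hb _ i
  simp only [ext_add, ext_smul, Pi.add_apply, Pi.smul_apply, smul_eq_mul]
  exact add_le_add (mul_le_mul_of_nonneg_left (hx i) ha) (mul_le_mul_of_nonneg_left (hy i) hb)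

noncomputable def neuron (a : Fin 4 → ℝ) (x : Fin 4 → ℝ) : ℝ := max 0 (a ⬝ᵥ x)

lemma neuron_smul_of_nonneg {c : ℝ} (hc : 0 ≤ c) (a : Fin 4 → ℝ) :
    neuron (c • a) = c • neuron a := by
  funext x
  simp only [neuron, smul_dotProduct, smul_eq_mul, Pi.smul_apply, mul_max_of_nonneg _ _ hc,
    mul_zero]

lemma hconforming_neuron_of_forall_cell {a : Fin 4 → ℝ}
    (h : ∀ π, (∀ x ∈ cell π, 0 ≤ a ⬝ᵥ x) ∨ ∀ x ∈ cell π, a ⬝ᵥ x ≤ 0) :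
    Hconforming (neuron a) := by
  refine ⟨continuous_const.max (continuous_const.dotProduct continuous_id), ?_, fun π => ?_⟩
  · intro c hc x
    rw [neuron, neuron, dotProduct_smul, smul_eq_mul, mul_max_of_nonneg _ _ hc, mul_zero]
  · rcases h π with hnonneg | hnonpos
    · exact ⟨a, fun x hx => max_eq_right (hnonneg x hx)⟩
    · exact ⟨0, fun x hx => by simp [neuron, max_eq_left (hnonpos x hx)]⟩

noncomputable def edgeVec (i j : Fin 5) : Fin 4 → ℝ :=
  Fin.tail (Pi.single i 1 - Pi.single j 1 : Fin 5 → ℝ)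

lemma edgeVec_dotProduct (i j : Fin 5) (x : Fin 4 → ℝ) :
    edgeVec i j ⬝ᵥ x = ext x i - ext x j := by
  rw [edgeVec, ← dotProduct_ext, sub_dotProduct, single_one_dotProduct, single_one_dotProduct]

lemma hconforming_neuron_edgeVec (i j : Fin 5) : Hconforming (neuron (edgeVec i j)) := by
  refine hconforming_neuron_of_forall_cell fun π => ?_
  simp only [edgeVec_dotProduct, sub_nonneg, sub_nonpos]
  have hmono : ∀ {k l : Fin 5}, π.symm k ≤ π.symm l → ∀ x ∈ cell π, ext x k ≤ ext x l :=
    fun hkl x hx => by simpa using mem_cell_iff_monotone.1 hx hkl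
  rcases le_total (π.symm i) (π.symm j) with hij | hji
  · exact Or.inr (hmono hij)
  · exact Or.inl (hmono hji)

/-- The coefficients of `x ↦ a ⬝ᵥ x` in the coordinates `x₀, …, x₄` of `ext x`, normalized to
sum zero so that adding a constant vector to `ext x` does not change the value. -/
noncomputable def zeroSumLift (a : Fin 4 → ℝ) : Fin 5 → ℝ := Fin.cons (-∑ j, a j) a

lemma sum_zeroSumLift (a : Fin 4 → ℝ) : ∑ k, zeroSumLift a k = 0 := by
  simp [zeroSumLift, Fin.sum_cons]

lemma tail_zeroSumLift (a : Fin 4 → ℝ) : Fin.tail (zeroSumLift a) = a := Fin.tail_cons _ _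

noncomputable def shiftZero (v : Fin 5 → ℝ) (j : Fin 4) : ℝ := v j.succ - v 0

lemma ext_shiftZero (v : Fin 5 → ℝ) (k : Fin 5) : ext (shiftZero v) k = v k - v 0 := by
  cases k using Fin.cases <;> simp [shiftZero]

lemma dotProduct_shiftZero (a : Fin 4 → ℝ) (v : Fin 5 → ℝ) :
    a ⬝ᵥ shiftZero v = zeroSumLift a ⬝ᵥ v := by
  have hext : ext (shiftZero v) = v - v 0 • 1 := funext fun k => by simp [ext_shiftZero]
  calc a ⬝ᵥ shiftZero v = zeroSumLift a ⬝ᵥ ext (shiftZero v) := by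
        rw [dotProduct_ext, tail_zeroSumLift]
    _ = zeroSumLift a ⬝ᵥ v := by
        rw [hext, dotProduct_sub, dotProduct_smul, dotProduct_one, sum_zeroSumLift, smul_zero,
          sub_zero]

lemma shiftZero_mem_cell {v : Fin 5 → ℝ} {π : Equiv.Perm (Fin 5)} (hv : Monotone (v ∘ π)) :
    shiftZero v ∈ cell π := by
  rw [mem_cell_iff_monotone]
  intro k l hkl
  simpa [ext_shiftZero] using hv hkl

lemma zeroSumLift_mul_le_zero {a : Fin 4 → ℝ} (h : Hconforming (neuron a)) {p q : Fin 5}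
    (hpq : p ≠ q) : zeroSumLift a p * zeroSumLift a q ≤ 0 := by
  -- Some cell contains both the indicator of `{p}` (as its top) and minus that of `{q}`.
  obtain ⟨π, hπp, hπq⟩ :=
    Equiv.Perm.exists_apply_eq_and_apply_eq (Fin.last_pos.ne' : Fin.last 4 ≠ 0) hpq
  obtain ⟨b, hb⟩ := h.2.2 π
  have htop : shiftZero (Pi.single p 1) ∈ cell π := shiftZero_mem_cell fun k l hkl => by
    rcases eq_or_ne k (Fin.last 4) with rfl | hk
    · rw [Fin.last_le_iff.1 hkl]
    · simp only [Function.comp_apply, ← hπp, Pi.single_apply, π.apply_eq_iff_eq, if_neg hk]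
      split_ifs <;> norm_num
  have hbot : shiftZero (-Pi.single q 1) ∈ cell π := shiftZero_mem_cell fun k l hkl => by
    rcases eq_or_ne l 0 with rfl | hl
    · rw [Fin.le_zero_iff.1 hkl]
    · simp only [Function.comp_apply, ← hπq, Pi.neg_apply, Pi.single_apply,
        π.apply_eq_iff_eq, if_neg hl]
      split_ifs <;> norm_num
  have := mul_nonneg_of_forall_max_zero_eq (ℓ := dotProductBilin ℝ ℝ a)
    (g := dotProductBilin ℝ ℝ b) (convex_cell π) hb htop hbot
  simp only [dotProductBilin_apply_apply, dotProduct_shiftZero, dotProduct_neg,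
    dotProduct_single_one] at this
  linarith

lemma exists_eq_smul_edgeVec {a : Fin 4 → ℝ} (h : Hconforming (neuron a)) :
    ∃ c : ℝ, 0 ≤ c ∧ ∃ i j, a = c • edgeVec i j := by
  obtain ⟨c, hc, i, j, hij⟩ := exists_eq_smul_single_sub_single (sum_zeroSumLift a)
    fun p q hpq => zeroSumLift_mul_le_zero h hpq
  exact ⟨c, hc, i, j, by
    rw [← tail_zeroSumLift a, hij]
    funext t
    simp [edgeVec, Fin.tail]⟩

noncomputable def S14 : Submodule ℝ ((Fin 4 → ℝ) → ℝ) :=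
  Submodule.span ℝ (gM '' {M | M.Nonempty ∧ M ≠ {0} ∧ M.card ≤ 2})

noncomputable def conformingOneLayer : Submodule ℝ ((Fin 4 → ℝ) → ℝ) :=
  Submodule.span ℝ (neuron '' {a | Hconforming (neuron a)})

lemma gM_pair (i j : Fin 5) : gM {i, j} = fun x => max (ext x i) (ext x j) := by
  funext x
  rw [gM, dif_pos (Finset.insert_nonempty i {j}),
    Finset.sup'_insert (H := Finset.singleton_nonempty j), Finset.sup'_singleton]

lemma max_ext_mem_S14 (i j : Fin 5) : (fun x => max (ext x i) (ext x j)) ∈ S14 := by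
  by_cases h : ({i, j} : Finset (Fin 5)) = {0}
  · obtain rfl := Finset.mem_singleton.1 (h ▸ Finset.mem_insert_self i {j})
    obtain rfl :=
      Finset.mem_singleton.1 (h ▸ Finset.mem_insert_of_mem (Finset.mem_singleton_self j))
    convert S14.zero_mem
    simp
  · rw [← gM_pair]
    exact Submodule.subset_span ⟨_, ⟨Finset.insert_nonempty i {j}, h, Finset.card_le_two⟩, rfl⟩

lemma ext_mem_S14 (k : Fin 5) : (fun x => ext x k) ∈ S14 := by
  simpa using max_ext_mem_S14 k k

lemma neuron_edgeVec_mem_S14 (i j : Fin 5) : neuron (edgeVec i j) ∈ S14 := by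
  have : neuron (edgeVec i j) = (fun x => max (ext x i) (ext x j)) - fun x => ext x j := by
    funext x
    simp only [neuron, edgeVec_dotProduct, Pi.sub_apply, max_zero_sub_eq]
  rw [this]
  exact S14.sub_mem (max_ext_mem_S14 i j) (ext_mem_S14 j)

lemma neuron_edgeVec_mem_conformingOneLayer (i j : Fin 5) :
    neuron (edgeVec i j) ∈ conformingOneLayer :=
  Submodule.subset_span ⟨_, hconforming_neuron_edgeVec i j, rfl⟩

lemma ext_mem_conformingOneLayer (k : Fin 5) : (fun x => ext x k) ∈ conformingOneLayer := by
  have : (fun x => ext x k) = neuron (edgeVec k 0) - neuron (edgeVec 0 k) := by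
    funext x
    simp only [Pi.sub_apply, neuron, edgeVec_dotProduct, ext_zero, sub_zero, zero_sub]
    rw [max_comm 0, max_comm 0, max_zero_sub_max_neg_zero_eq_self]
  rw [this]
  exact Submodule.sub_mem _ (neuron_edgeVec_mem_conformingOneLayer k 0)
    (neuron_edgeVec_mem_conformingOneLayer 0 k)

lemma gM_mem_conformingOneLayer {M : Finset (Fin 5)} (hM : M.Nonempty) (hcard : M.card ≤ 2) :
    gM M ∈ conformingOneLayer := by
  obtain ⟨i, j, rfl⟩ := Finset.exists_eq_pair_of_card_le_two hM hcard
  have : gM {i, j} = neuron (edgeVec i j) + fun x => ext x j := by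
    funext x
    simp only [gM_pair, neuron, edgeVec_dotProduct, Pi.add_apply]
    rw [max_zero_sub_eq, sub_add_cancel]
  rw [this]
  exact Submodule.add_mem _ (neuron_edgeVec_mem_conformingOneLayer i j)
    (ext_mem_conformingOneLayer j)

theorem S14_eq_conformingOneLayer : S14 = conformingOneLayer := by
  apply le_antisymm
  · refine Submodule.span_le.2 ?_
    rintro _ ⟨M, ⟨hM, -, hcard⟩, rfl⟩
    exact gM_mem_conformingOneLayer hM hcard
  · refine Submodule.span_le.2 ?_
    rintro _ ⟨a, ha, rfl⟩
    obtain ⟨c, hc, i, j, rfl⟩ := exists_eq_smul_edgeVec ha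
    rw [SetLike.mem_coe, neuron_smul_of_nonneg hc]
    exact S14.smul_mem c (neuron_edgeVec_mem_S14 i j)

lemma exists_coeff_iff_mem_S14 (f : (Fin 4 → ℝ) → ℝ) :
    (∃ c : Finset (Fin 5) → ℝ,
        (∀ M, ¬(M.Nonempty ∧ M ≠ {0} ∧ M.card ≤ 2) → c M = 0) ∧
        ∀ x, f x = ∑ M : Finset (Fin 5), c M * gM M x) ↔ f ∈ S14 := by
  constructor
  · rintro ⟨c, hc, hf⟩
    have : f = ∑ M, c M • gM M := funext fun x => by simp [hf]
    rw [this]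
    refine Submodule.sum_mem _ fun M _ => ?_
    by_cases hM : M.Nonempty ∧ M ≠ {0} ∧ M.card ≤ 2
    · exact S14.smul_mem _ (Submodule.subset_span ⟨M, hM, rfl⟩)
    · simp [hc M hM]
  · intro hf
    obtain ⟨l, hl, rfl⟩ := (Finsupp.mem_span_image_iff_linearCombination ℝ).1 hf
    refine ⟨l, fun M hM => (Finsupp.mem_supported' _ _).1 hl M hM, fun x => ?_⟩
    simp [Finsupp.linearCombination_apply, Finsupp.sum_fintype]

lemma exists_network_iff_mem_conformingOneLayer (f : (Fin 4 → ℝ) → ℝ) :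
    (∃ (m : ℕ) (A : Fin m → Fin 4 → ℝ) (c : Fin m → ℝ),
        (∀ i, Hconforming (neuron (A i))) ∧ ∀ x, f x = ∑ i, c i * neuron (A i) x) ↔
      f ∈ conformingOneLayer := by
  constructor
  · rintro ⟨m, A, c, hA, hf⟩
    have : f = ∑ i, c i • neuron (A i) := funext fun x => by simp [hf]
    rw [this]
    exact Submodule.sum_mem _ fun i _ =>
      Submodule.smul_mem _ _ (Submodule.subset_span ⟨A i, hA i, rfl⟩)
  · intro hf
    obtain ⟨m, c, g, hg⟩ := Submodule.mem_span_set'.1 hf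
    choose A hA hAg using fun i => (g i).2
    refine ⟨m, A, c, hA, fun x => ?_⟩
    simp [← hg, hAg]

/-- `S¹⁴` (the span of the 14 functions `g_M` with `M ∉ {∅,{0}}` and
`|M| ≤ 2`) consists exactly of the functions computed by `H`-conforming bias-free ReLU
neural networks with one hidden layer. -/
theorem s14_eq_conforming_two_layer (f : (Fin 4 → ℝ) → ℝ) :
    (∃ c : Finset (Fin 5) → ℝ,
        (∀ M, ¬(M.Nonempty ∧ M ≠ {0} ∧ M.card ≤ 2) → c M = 0) ∧
        ∀ x, f x = ∑ M : Finset (Fin 5), c M * gM M x) ↔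
      (∃ (m : ℕ) (A : Fin m → Fin 4 → ℝ) (c : Fin m → ℝ),
        (∀ i, Hconforming (fun x => max 0 (∑ t, A i t * x t))) ∧
        ∀ x, f x = ∑ i, c i * max 0 (∑ t, A i t * x t)) := by
  rw [exists_coeff_iff_mem_S14, S14_eq_conformingOneLayer]
  exact (exists_network_iff_mem_conformingOneLayer f).symm
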